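/- For every integer a, the polynomial f_a(X) = X^3 - a·X^2 - (a+3)·X - 1 is irreducible over ℚ. -/

import Mathlib

open Polynomial

/-!
By the integral root theorem, a rational root of the monic integer cubic `f_a` would be an
integer dividing its constant term `-1`, i.e. `±1`. But `f_a(1) = -2a - 3` is odd and
`f_a(-1) = 1`, so `f_a` has no rational root, and a cubic without roots over a field is
irreducible.
-/

namespace Polynomial

theorem Monic.irreducible_map_of_forall_dvd_coeff_zero_not_isRoot
    {A K : Type*} [CommRing A] [IsDomain A] [UniqueFactorizationMonoid A] [Field K]
    [Algebra A K] [IsFractionRing A K] {p : A[X]} (hp : p.Monic)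
    (hdeg : p.natDegree ∈ Finset.Icc 1 3) (hroot : ∀ r, r ∣ p.coeff 0 → ¬ p.IsRoot r) :
    Irreducible (p.map (algebraMap A K)) := by
  refine irreducible_of_degree_le_three_of_not_isRoot
    (by rwa [hp.natDegree_map]) fun x hx => ?_
  obtain ⟨r, rfl, hr⟩ := exists_integer_of_is_root_of_monic hp
    (show aeval x p = 0 by rwa [aeval_def, ← eval_map])
  rw [IsRoot, eval_map_apply, map_eq_zero_iff _ (IsFractionRing.injective A K)] at hx
  exact hroot r hr hx

end Polynomial

noncomputable def simplestCubic (a : ℤ) : ℤ[X] := X ^ 3 - C a * X ^ 2 - C (a + 3) * X - 1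

section simplestCubic

variable (a : ℤ)

theorem monic_simplestCubic : (simplestCubic a).Monic := by
  unfold simplestCubic; monicity!

theorem natDegree_simplestCubic : (simplestCubic a).natDegree = 3 := by
  unfold simplestCubic; compute_degree!

theorem coeff_zero_simplestCubic : (simplestCubic a).coeff 0 = -1 := by
  simp [simplestCubic]

theorem eval_one_simplestCubic : (simplestCubic a).eval 1 = -2 * a - 3 := by
  simp [simplestCubic]; ring

theorem eval_neg_one_simplestCubic : (simplestCubic a).eval (-1) = 1 := by
  simp [simplestCubic]; ring

theorem map_simplestCubic :
    (simplestCubic a).map (algebraMap ℤ ℚ) =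
      X ^ 3 - C (a : ℚ) * X ^ 2 - C ((a : ℚ) + 3) * X - 1 := by
  simp [simplestCubic, C_add, C_ofNat]

theorem not_isRoot_simplestCubic_of_dvd_one {r : ℤ} (hr : r ∣ 1) :
    ¬ (simplestCubic a).IsRoot r := by
  rcases Int.isUnit_iff.mp (isUnit_of_dvd_one hr) with rfl | rfl
  · rw [IsRoot, eval_one_simplestCubic]; omega
  · rw [IsRoot, eval_neg_one_simplestCubic]; exact one_ne_zero

end simplestCubic

theorem simplest_cubic_irreducible (a : ℤ) :
    Irreducible (X ^ 3 - C (a : ℚ) * X ^ 2 - C ((a : ℚ) + 3) * X - 1 : ℚ[X]) := by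
  rw [← map_simplestCubic]
  refine (monic_simplestCubic a).irreducible_map_of_forall_dvd_coeff_zero_not_isRoot
    (by simp [natDegree_simplestCubic]) fun r hr => ?_
  rw [coeff_zero_simplestCubic, dvd_neg] at hr
  exact not_isRoot_simplestCubic_of_dvd_one a hr
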